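/- For every integer K ≥ 1, every real ρ > 0, and every ε with 0 ≤ ε < 1, the series Σ_{i=0}^∞ (ρ^i e^{−ρ}/i!) · (1 − (1−ε)ε^i)^K converges and equals Σ_{k=0}^K (−1)^k · C(K,k) · (1−ε)^k · e^{−ρ(1−ε^k)}. (Closed form for the packet loss probability ζ_K with K receivers.) -/

import Mathlib

/-!
Expanding `(1 - (1-ε)ε^i)^K` by the binomial theorem turns the series into a finite
combination of the series `Σ_i P(I = i) (ε^k)^i`, i.e. of values of the probability
generating function `E[c^I] = e^{-ρ(1-c)}` of the Poisson law at `c = ε^k`.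
-/

open Finset Nat

theorem Real.hasSum_pow_div_factorial (x : ℝ) :
    HasSum (fun n : ℕ => x ^ n / n !) (Real.exp x) := by
  rw [Real.exp_eq_exp_ℝ]
  exact NormedSpace.expSeries_div_hasSum_exp x

theorem hasSum_poisson_mul_pow (ρ c : ℝ) :
    HasSum (fun i : ℕ => ρ ^ i * Real.exp (-ρ) / i ! * c ^ i) (Real.exp (-(ρ * (1 - c)))) := by
  convert! (Real.hasSum_pow_div_factorial (ρ * c)).mul_left (Real.exp (-ρ)) using 1
  · ext i
    rw [mul_pow]
    ring
  · rw [← Real.exp_add]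
    ring_nf

theorem one_sub_pow_eq_sum {R : Type*} [CommRing R] (a : R) (n : ℕ) :
    (1 - a) ^ n = ∑ k ∈ range (n + 1), (-1) ^ k * n.choose k * a ^ k := by
  rw [sub_eq_neg_add, add_pow]
  refine sum_congr rfl fun k _ => ?_
  rw [one_pow, neg_pow]
  ring

theorem slotted_aloha_packet_loss_probability_general
    (K : ℕ) (ρ ε : ℝ) :
    HasSum
      (fun i : ℕ =>
        ρ ^ i * Real.exp (-ρ) / (Nat.factorial i) * (1 - (1 - ε) * ε ^ i) ^ K)
      (∑ k ∈ Finset.range (K + 1),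
        (-1 : ℝ) ^ k * (K.choose k) * (1 - ε) ^ k * Real.exp (-(ρ * (1 - ε ^ k)))) := by
  convert! hasSum_sum fun k (_ : k ∈ range (K + 1)) =>
    (hasSum_poisson_mul_pow ρ (ε ^ k)).mul_left ((-1 : ℝ) ^ k * K.choose k * (1 - ε) ^ k) using 1
  ext i
  rw [one_sub_pow_eq_sum, mul_sum]
  refine sum_congr rfl fun k _ => ?_
  rw [mul_pow, ← pow_mul, ← pow_mul, Nat.mul_comm]
  ring

/-- Closed form for the packet loss probability `ζ_K` with `K` receivers:
`Σ_{i≥0} (ρ^i e^{-ρ}/i!) (1-(1-ε)ε^i)^K = Σ_{k=0}^K (-1)^k C(K,k) (1-ε)^k e^{-ρ(1-ε^k)}`. -/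
theorem slotted_aloha_packet_loss_probability
    (K : ℕ) (hK : 1 ≤ K) (ρ ε : ℝ) (hρ : 0 < ρ) (hε0 : 0 ≤ ε) (hε1 : ε < 1) :
    HasSum
      (fun i : ℕ =>
        ρ ^ i * Real.exp (-ρ) / (Nat.factorial i) * (1 - (1 - ε) * ε ^ i) ^ K)
      (∑ k ∈ Finset.range (K + 1),
        (-1 : ℝ) ^ k * (K.choose k) * (1 - ε) ^ k * Real.exp (-(ρ * (1 - ε ^ k)))) :=
  slotted_aloha_packet_loss_probability_general K ρ ε
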